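/- Consider the 1-hop-max RGCR scheme with independent cluster-level randomization at treatment probability p ∈ (0,1) on a graph with n nodes, and suppose every potential outcome satisfies 0 ≤ Y_i(1) ≤ Ȳ. Then the variance of the Horvitz–Thompson mean-outcome estimator satisfies Var(μ̂(1)) ≤ (Ȳ²/n²) ∑_{i=1}^n |B_4(i)| / P(E_i^1). -/

import Mathlib

/-!
The estimator is a sum of Horvitz–Thompson weights `Y i · 1{E i} / P(E i)`, so its variance is the
sum of their pairwise covariances. The event `E i` is determined by the pairs `(X v, Z v)` with
`v ∈ B₂(i)`, and these pairs are independent across nodes; hence `E i` and `E j` are independent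
as soon as `B₂(i)` and `B₂(j)` are disjoint, which holds when `j ∉ B₄(i)`, and then the covariance
vanishes. Every remaining covariance is at most `Ȳ² / P(E i)`.
-/

open MeasureTheory ProbabilityTheory Filter SimpleGraph Set

noncomputable section

/-- The `r`-hop ball around node `i`: all nodes at graph distance at most `r`
(using the extended graph distance, so unreachable nodes are excluded). -/
def hopBall {V : Type*} (G : SimpleGraph V) (i : V) (r : ℕ) : Set V :=
  {j | G.edist i j ≤ r}

/-- The full-neighborhood exposure event in the 1-hop-max RGCR scheme: every node
`j` in the closed neighborhood `B₁(i)` has treatment status `b`, i.e. the cluster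
center of `j` (the node `v ∈ B₁(j)` achieving the 1-hop max of `X`) has `Z v = b`. -/
def exposure {V Ω : Type*} (G : SimpleGraph V) (X : V → Ω → ℝ) (Z : V → Ω → Bool)
    (b : Bool) (i : V) : Set Ω :=
  {ω | ∀ j ∈ hopBall G i 1, ∃ v ∈ hopBall G j 1,
      (∀ u ∈ hopBall G j 1, X u ω ≤ X v ω) ∧ Z v ω = b}

/-- The 1-hop-max RGCR model with independent cluster-level randomization:
the `X v` are i.i.d. uniform on `[0,1]`, the `Z v` are i.i.d. Bernoulli(`p`),
and the family `X` is independent of the family `Z`. -/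
structure RGCRModel {V Ω : Type*} [MeasurableSpace Ω]
    (X : V → Ω → ℝ) (Z : V → Ω → Bool) (μ : Measure Ω) (p : ℝ) : Prop where
  meas_X : ∀ v, Measurable (X v)
  meas_Z : ∀ v, Measurable (Z v)
  law_X : ∀ v, μ.map (X v) = volume.restrict (Set.Icc (0:ℝ) 1)
  law_Z : ∀ v, μ {ω | Z v ω = true} = ENNReal.ofReal p
  indep_X : iIndepFun X μ
  indep_Z : iIndepFun Z μ
  indep_XZ : IndepFun (fun ω v => X v ω) (fun ω v => Z v ω) μ

section HopBall

variable {V : Type*} {G : SimpleGraph V}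

lemma mem_hopBall_add {i j u : V} {a b : ℕ} (hj : j ∈ hopBall G i a)
    (hu : u ∈ hopBall G j b) : u ∈ hopBall G i (a + b) :=
  calc G.edist i u ≤ G.edist i j + G.edist j u := G.edist_triangle
    _ ≤ a + b := add_le_add hj hu
    _ = ((a + b : ℕ) : ℕ∞) := by push_cast; rfl

lemma mem_hopBall_comm {i j : V} {r : ℕ} : j ∈ hopBall G i r ↔ i ∈ hopBall G j r := by
  simp only [hopBall, Set.mem_ofPred_eq, G.edist_comm]

lemma disjoint_hopBall_two {i j : V} (h : j ∉ hopBall G i 4) :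
    Disjoint (hopBall G i 2) (hopBall G j 2) :=
  Set.disjoint_left.mpr fun _ hi hj => h (mem_hopBall_add hi (mem_hopBall_comm.mp hj))

end HopBall

lemma ProbabilityTheory.iIndepFun.prodMk_of_indepFun {ι Ω α β : Type*} [Fintype ι]
    [MeasurableSpace Ω] [MeasurableSpace α] [MeasurableSpace β] {μ : Measure Ω}
    [IsProbabilityMeasure μ] {f : ι → Ω → α} {g : ι → Ω → β}
    (hf_meas : ∀ i, Measurable (f i)) (hg_meas : ∀ i, Measurable (g i))
    (hf : iIndepFun f μ) (hg : iIndepFun g μ)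
    (hfg : IndepFun (fun ω i => f i ω) (fun ω i => g i ω) μ) :
    iIndepFun (fun i ω => (f i ω, g i ω)) μ := by
  rw [iIndepFun_iff_map_fun_eq_pi_map fun i => ((hf_meas i).prodMk (hg_meas i)).aemeasurable]
  have hpair : ∀ i, μ.map (fun ω => (f i ω, g i ω)) = (μ.map (f i)).prod (μ.map (g i)) :=
    fun i => ((hfg.comp (measurable_pi_apply i) (measurable_pi_apply i)).map_prod_eq_prod_map_map
      (hf_meas i).aemeasurable (hg_meas i).aemeasurable)
  -- The joint law of the pairs is the image of `(law of f) ⊗ (law of g)` under the reshuffling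
  -- `(ι → α) × (ι → β) ≃ᵐ (ι → α × β)`, which carries products of `pi` measures to `pi`.
  let e := MeasurableEquiv.arrowProdEquivProdArrow α β ι
  have hW : Measurable fun ω i => (f i ω, g i ω) :=
    measurable_pi_lambda _ fun i => (hf_meas i).prodMk (hg_meas i)
  have hjoint : (μ.map fun ω i => (f i ω, g i ω)).map e
      = (Measure.pi fun i => μ.map (f i)).prod (Measure.pi fun i => μ.map (g i)) := by
    rw [Measure.map_map e.measurable hW,
      ← hf.map_fun_eq_pi_map fun i => (hf_meas i).aemeasurable,
      ← hg.map_fun_eq_pi_map fun i => (hg_meas i).aemeasurable]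
    exact hfg.map_prod_eq_prod_map_map (measurable_pi_lambda _ hf_meas).aemeasurable
      (measurable_pi_lambda _ hg_meas).aemeasurable
  simp_rw [hpair]
  rw [← (measurePreserving_arrowProdEquivProdArrow α β ι _ _).symm.map_eq, ← hjoint,
    e.map_symm_map]

section Variance

variable {Ω ι : Type*} [MeasurableSpace Ω] {μ : Measure Ω} [IsProbabilityMeasure μ]

lemma covariance_indicator_one {A B : Set Ω} (hA : MeasurableSet A) (hB : MeasurableSet B) :
    cov[A.indicator (fun _ => (1:ℝ)), B.indicator (fun _ => 1); μ]
      = μ.real (A ∩ B) - μ.real A * μ.real B := by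
  have hmul : A.indicator (fun _ => (1:ℝ)) * B.indicator (fun _ => 1) = (A ∩ B).indicator 1 :=
    Set.inter_indicator_one.symm
  rw [covariance_eq_sub ((memLp_const 1).indicator hA) ((memLp_const 1).indicator hB), hmul]
  simp [integral_indicator_one, hA, hB, hA.inter hB]

lemma covariance_mul_indicator_div {A B : Set Ω} (hA : MeasurableSet A) (hB : MeasurableSet B)
    (a b : ℝ) :
    cov[fun ω => a * A.indicator (fun _ => (1:ℝ)) ω / μ.real A,
        fun ω => b * B.indicator (fun _ => (1:ℝ)) ω / μ.real B; μ]
      = a / μ.real A * (b / μ.real B) * (μ.real (A ∩ B) - μ.real A * μ.real B) := by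
  rw [covariance_fun_div_left, covariance_fun_div_right, covariance_const_mul_left,
    covariance_const_mul_right, covariance_indicator_one hA hB]
  ring

lemma covariance_mul_indicator_div_le {A B : Set Ω} (hA : MeasurableSet A)
    (hB : MeasurableSet B) {a b c : ℝ} (ha : a ∈ Set.Icc 0 c) (hb : b ∈ Set.Icc 0 c) :
    cov[fun ω => a * A.indicator (fun _ => (1:ℝ)) ω / μ.real A,
        fun ω => b * B.indicator (fun _ => (1:ℝ)) ω / μ.real B; μ] ≤ c ^ 2 / μ.real A := by
  have hb_mul : b / μ.real B * μ.real B ≤ c := by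
    rcases eq_or_ne (μ.real B) 0 with h | h
    · simp [h, hb.1.trans hb.2]
    · rw [div_mul_cancel₀ b h]; exact hb.2
  have hinter : μ.real (A ∩ B) ≤ μ.real B := measureReal_mono Set.inter_subset_right
  rw [covariance_mul_indicator_div hA hB]
  calc a / μ.real A * (b / μ.real B) * (μ.real (A ∩ B) - μ.real A * μ.real B)
      ≤ a / μ.real A * (b / μ.real B * μ.real B) := by
        rw [mul_assoc]
        gcongr
        · exact div_nonneg ha.1 measureReal_nonneg
        · exact div_nonneg hb.1 measureReal_nonneg
        · linarith [mul_nonneg (measureReal_nonneg (μ := μ) (s := A))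
            (measureReal_nonneg (μ := μ) (s := B))]
    _ ≤ c / μ.real A * c := by
        gcongr
        · exact mul_nonneg (div_nonneg hb.1 measureReal_nonneg) measureReal_nonneg
        · exact div_nonneg (ha.1.trans ha.2) measureReal_nonneg
        · exact ha.2
    _ = c ^ 2 / μ.real A := by ring

lemma variance_sum_mul_indicator_div_le [Fintype ι] {E : ι → Set Ω}
    (hE : ∀ i, MeasurableSet (E i)) (N : ι → Set ι)
    (hN : ∀ i j, j ∉ N i → μ (E i ∩ E j) = μ (E i) * μ (E j)) {c : ℝ} {Y : ι → ℝ}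
    (hY : ∀ i, Y i ∈ Set.Icc 0 c) :
    Var[fun ω => ∑ i, Y i * (E i).indicator (fun _ => (1:ℝ)) ω / μ.real (E i); μ]
      ≤ c ^ 2 * ∑ i, ((N i).ncard : ℝ) / μ.real (E i) := by
  classical
  have hcov_eq_zero : ∀ i j, j ∉ N i →
      cov[fun ω => Y i * (E i).indicator (fun _ => (1:ℝ)) ω / μ.real (E i),
        fun ω => Y j * (E j).indicator (fun _ => (1:ℝ)) ω / μ.real (E j); μ] = 0 := by
    intro i j hj
    have hmul : μ.real (E i ∩ E j) = μ.real (E i) * μ.real (E j) := by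
      simp only [measureReal_def, hN i j hj, ENNReal.toReal_mul]
    rw [covariance_mul_indicator_div (hE i) (hE j), hmul, sub_self, mul_zero]
  have hmemLp : ∀ i,
      MemLp (fun ω => Y i * (E i).indicator (fun _ => (1:ℝ)) ω / μ.real (E i)) 2 μ := fun i =>
    (((memLp_const (1:ℝ)).indicator (hE i)).const_mul (Y i)).mul_const (μ.real (E i))⁻¹
  rw [variance_fun_sum hmemLp]
  calc _ ≤ ∑ i, ∑ j ∈ (N i).toFinset, c ^ 2 / μ.real (E i) := by
        refine Finset.sum_le_sum fun i _ => ?_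
        rw [← Finset.sum_subset (Finset.subset_univ (N i).toFinset)
          fun j _ hj => hcov_eq_zero i j (by simpa using hj)]
        exact Finset.sum_le_sum fun j _ =>
          covariance_mul_indicator_div_le (hE i) (hE j) (hY i) (hY j)
    _ = c ^ 2 * ∑ i, ((N i).ncard : ℝ) / μ.real (E i) := by
        simp only [Finset.sum_const, nsmul_eq_mul, Finset.mul_sum, Set.ncard_eq_toFinset_card']
        exact Finset.sum_congr rfl fun i _ => by ring

end Variance

section Exposure

variable {V Ω : Type*} {G : SimpleGraph V} {X : V → Ω → ℝ} {Z : V → Ω → Bool}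

lemma measurableSet_exposure_of_measurable [Countable V] {m : MeasurableSpace Ω}
    {b : Bool} {i : V}
    (hX : ∀ u ∈ hopBall G i 2, Measurable[m] (X u))
    (hZ : ∀ u ∈ hopBall G i 2, Measurable[m] (Z u)) :
    MeasurableSet[m] (exposure G X Z b i) := by
  have hE : exposure G X Z b i = ⋂ j ∈ hopBall G i 1, ⋃ v ∈ hopBall G j 1,
      (⋂ u ∈ hopBall G j 1, {ω | X u ω ≤ X v ω}) ∩ Z v ⁻¹' {b} := by
    ext
    simp only [exposure, Set.mem_iInter, Set.mem_iUnion, Set.mem_inter_iff, Set.mem_preimage,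
      Set.mem_singleton_iff, Set.mem_ofPred_eq, exists_prop]
  rw [hE]
  refine .biInter (Set.to_countable _) fun j hj => .biUnion (Set.to_countable _) fun v hv => ?_
  refine .inter (.biInter (Set.to_countable _) fun u hu => ?_) ?_
  · exact measurableSet_le (hX u (mem_hopBall_add hj hu)) (hX v (mem_hopBall_add hj hv))
  · exact hZ v (mem_hopBall_add hj hv) (measurableSet_singleton b)

lemma measurableSet_exposure [Countable V] [MeasurableSpace Ω] {μ : Measure Ω} {p : ℝ}
    (hm : RGCRModel X Z μ p) (b : Bool) (i : V) : MeasurableSet (exposure G X Z b i) :=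
  measurableSet_exposure_of_measurable (fun u _ => hm.meas_X u) (fun u _ => hm.meas_Z u)

lemma measure_inter_exposure_of_notMem_hopBall [Fintype V] [MeasurableSpace Ω]
    {μ : Measure Ω} [IsProbabilityMeasure μ] {p : ℝ} (hm : RGCRModel X Z μ p) {b : Bool}
    {i j : V} (h : j ∉ hopBall G i 4) :
    μ (exposure G X Z b i ∩ exposure G X Z b j)
      = μ (exposure G X Z b i) * μ (exposure G X Z b j) := by
  have hW_meas : ∀ v, Measurable fun ω => (X v ω, Z v ω) :=
    fun v => (hm.meas_X v).prodMk (hm.meas_Z v)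
  have hW : iIndepFun (fun v ω => (X v ω, Z v ω)) μ :=
    hm.indep_X.prodMk_of_indepFun hm.meas_X hm.meas_Z hm.indep_Z hm.indep_XZ
  let m : V → MeasurableSpace Ω := fun v =>
    MeasurableSpace.comap (fun ω => (X v ω, Z v ω)) inferInstance
  have hlocal : ∀ k, MeasurableSet[⨆ v ∈ hopBall G k 2, m v] (exposure G X Z b k) := by
    intro k
    have hW_local : ∀ u ∈ hopBall G k 2,
        Measurable[⨆ v ∈ hopBall G k 2, m v] fun ω => (X u ω, Z u ω) := fun u hu =>
      (comap_measurable _).mono (le_iSup₂ (f := fun v (_ : v ∈ hopBall G k 2) => m v) u hu) le_rfl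
    exact measurableSet_exposure_of_measurable (fun u hu => (hW_local u hu).fst)
      (fun u hu => (hW_local u hu).snd)
  exact (Indep_iff _ _ μ).mp (indep_iSup_of_disjoint (fun v => (hW_meas v).comap_le)
    ((iIndepFun_iff_iIndep _ _ μ).mp hW) (disjoint_hopBall_two h)) _ _ (hlocal i) (hlocal j)

end Exposure

theorem ht_variance_upper_bound_general
    {V Ω : Type*} [Fintype V] [MeasurableSpace Ω]
    (G : SimpleGraph V) (μ : Measure Ω) [IsProbabilityMeasure μ]
    (X : V → Ω → ℝ) (Z : V → Ω → Bool) (p : ℝ)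
    (hmodel : RGCRModel X Z μ p)
    (Ybar : ℝ) (Y : V → ℝ) (hY : ∀ i, Y i ∈ Set.Icc 0 Ybar) :
    variance (fun ω => (Fintype.card V : ℝ)⁻¹ *
        ∑ i : V, Y i * (exposure G X Z true i).indicator (fun _ => (1:ℝ)) ω /
          (μ (exposure G X Z true i)).toReal) μ
      ≤ Ybar ^ 2 / (Fintype.card V : ℝ) ^ 2 *
        ∑ i : V, ((hopBall G i 4).ncard : ℝ) / (μ (exposure G X Z true i)).toReal := by
  have hvar := variance_sum_mul_indicator_div_le (measurableSet_exposure hmodel true)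
    (fun i => hopBall G i 4) (fun _ _ => measure_inter_exposure_of_notMem_hopBall hmodel) hY
  simp only [← measureReal_def]
  rw [variance_const_mul, div_eq_mul_inv, inv_pow, mul_comm (Ybar ^ 2), mul_assoc]
  exact mul_le_mul_of_nonneg_left hvar (by positivity)

/-- Under 1-hop-max RGCR with independent cluster-level
randomization at treatment probability `p ∈ (0,1)`, if all potential outcomes
satisfy `0 ≤ Y i ≤ Ȳ`, then the variance of the Horvitz–Thompson mean-outcome
estimator `μ̂(1) = (1/n) ∑ᵢ Y i · 1{E_i^1} / P(E_i^1)` satisfies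
`Var(μ̂(1)) ≤ (Ȳ²/n²) ∑ᵢ |B₄(i)| / P(E_i^1)`. -/
theorem ht_variance_upper_bound
    {V Ω : Type*} [Fintype V] [MeasurableSpace Ω]
    (G : SimpleGraph V) (μ : Measure Ω) [IsProbabilityMeasure μ]
    (X : V → Ω → ℝ) (Z : V → Ω → Bool) (p : ℝ) (hp : p ∈ Set.Ioo (0:ℝ) 1)
    (hmodel : RGCRModel X Z μ p)
    (Ybar : ℝ) (Y : V → ℝ) (hY : ∀ i, Y i ∈ Set.Icc 0 Ybar)
    (hpos : ∀ i : V, 0 < μ (exposure G X Z true i)) :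
    variance (fun ω => (Fintype.card V : ℝ)⁻¹ *
        ∑ i : V, Y i * (exposure G X Z true i).indicator (fun _ => (1:ℝ)) ω /
          (μ (exposure G X Z true i)).toReal) μ
      ≤ Ybar ^ 2 / (Fintype.card V : ℝ) ^ 2 *
        ∑ i : V, ((hopBall G i 4).ncard : ℝ) / (μ (exposure G X Z true i)).toReal :=
  ht_variance_upper_bound_general G μ X Z p hmodel Ybar Y hY
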